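/- Let Q be a continuous, nonnegative, nonzero, compactly supported steady state of the gravitational Vlasov–Poisson system of the form Q(x,v) = F(|v|²/2 + φ_Q(x)) with F continuous, F(e)=0 for e ≥ e₀ (some e₀<0), F strictly decreasing and C¹ on (-∞,e₀). Then F(e) = Q*(a_{φ_Q}(e)) for all e ∈ [φ_Q(0), 0), and consequently Q^{*φ_Q} = Q on ℝ⁶. -/

import Mathlib

/-!
Because `F` is antitone, the superlevel sets of `Q = F ∘ E`, with `E(x, v) = |v|²/2 + φ_Q(x)`,
are squeezed between sublevel sets of the microscopic energy: `{Q > F e} ⊆ {E < e}`, and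
`{E < e'} ⊆ {Q > s}` whenever `s < F e'`. By Fubini and the volume of a ball,
`meas {E < e} = a_φ(e)`; this is finite because `φ_Q` is continuous and tends to `0` at
infinity, and it increases strictly past any `e ≥ φ_Q(x₀)`, since `{e < E < e'}` is then a
nonempty open set.
Continuity of `F` therefore pins the infimum defining `Q*(a_φ(e))` at `F e`.
-/

open MeasureTheory Real Filter Set ENNReal

noncomputable section

abbrev R3 := EuclideanSpace ℝ (Fin 3)

def mX (φ : R3 → ℝ) : ℝ := ⨅ x : R3, (1 + ‖x‖) * |φ x|

def memX (φ : R3 → ℝ) : Prop :=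
  Continuous φ ∧ (∀ x, φ x ≤ 0) ∧ Tendsto φ (cocompact R3) (nhds 0) ∧
    Integrable (fun x => ‖fderiv ℝ φ x‖ ^ 2) ∧ 0 < mX φ

def memE (f : R3 × R3 → ℝ) : Prop :=
  (∀ p, 0 ≤ f p) ∧ Integrable f ∧ MemLp f ⊤ volume ∧
    Integrable (fun p : R3 × R3 => ‖p.2‖ ^ 2 * f p)

def aphi (φ : R3 → ℝ) (e : ℝ) : ℝ :=
  (8 * π * Real.sqrt 2 / 3) * ∫ x : R3, (max (e - φ x) 0) ^ ((3 : ℝ) / 2)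

/-- Distribution function `μ_f(s) = meas{f > s}`. -/
def distFun (f : R3 × R3 → ℝ) (s : ℝ) : ℝ≥0∞ := volume {p : R3 × R3 | f p > s}

/-- Schwarz symmetric decreasing rearrangement on `ℝ₊`. -/
def schwarz (f : R3 × R3 → ℝ) (t : ℝ) : ℝ :=
  sInf {s : ℝ | 0 ≤ s ∧ distFun f s ≤ ENNReal.ofReal t}

/-- The generalized rearrangement `f^{*φ}` with respect to the microscopic energy. -/
def genRearr (f : R3 × R3 → ℝ) (φ : R3 → ℝ) (p : R3 × R3) : ℝ :=
  if ‖p.2‖ ^ 2 / 2 + φ p.1 < 0 then schwarz f (aphi φ (‖p.2‖ ^ 2 / 2 + φ p.1)) else 0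


def rho (f : R3 × R3 → ℝ) (x : R3) : ℝ := ∫ v, f (x, v)

/-- Poisson field `φ_f(x) = -(1/(4π)) ∫ ρ_f(y)/|x-y| dy`. -/
def phiF (f : R3 × R3 → ℝ) (x : R3) : ℝ :=
  -(1 / (4 * π)) * ∫ y, rho f y / ‖x - y‖

open Topology

theorem locallyIntegrable_norm_inv {E : Type*} [NormedAddCommGroup E] [NormedSpace ℝ E]
    [FiniteDimensional ℝ E] [MeasurableSpace E] [BorelSpace E] (μ : Measure E)
    [μ.IsAddHaarMeasure] (hE : 1 < Module.finrank ℝ E) :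
    LocallyIntegrable (fun z : E => ‖z‖⁻¹) μ :=
  locallyIntegrable_of_norm_le_rpow (C := 1) (α := 1) hE.le (by exact_mod_cast hE)
    (Eventually.of_forall fun z => by simp [Real.rpow_neg_one])
    measurable_norm.inv.aestronglyMeasurable

theorem integral_div_norm_sub_le {E : Type*} [NormedAddCommGroup E] [MeasurableSpace E]
    {μ : Measure E} {g : E → ℝ} (hg : Integrable g μ) (hg0 : ∀ y, 0 ≤ g y) {R d : ℝ}
    (hd : 0 < d) (hgR : ∀ y, R < ‖y‖ → g y = 0) {x : E} (hx : R + d ≤ ‖x‖) :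
    ∫ y, g y / ‖x - y‖ ∂μ ≤ (∫ y, g y ∂μ) / d := by
  rw [← integral_div]
  refine integral_mono_of_nonneg (Eventually.of_forall fun y => div_nonneg (hg0 y) (norm_nonneg _))
    (hg.div_const d) (Eventually.of_forall fun y => ?_)
  rcases le_or_gt ‖y‖ R with hy | hy
  · exact div_le_div_of_nonneg_left (hg0 y) hd (by linarith [norm_sub_norm_le x y])
  · simp [hgR y hy]

section Potential

variable {Q : R3 × R3 → ℝ}

theorem continuous_rho (hQc : Continuous Q) (hQsupp : HasCompactSupport Q) :
    Continuous (rho Q) := by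
  rw [← continuousOn_univ]
  refine continuousOn_integral_of_compact_support (hQsupp.image continuous_snd)
    (hQc.comp continuous_id).continuousOn fun x v _ hv => ?_
  by_contra hQ
  exact hv ⟨(x, v), subset_tsupport Q hQ, rfl⟩

theorem hasCompactSupport_rho (hQsupp : HasCompactSupport Q) : HasCompactSupport (rho Q) := by
  refine HasCompactSupport.intro (hQsupp.image continuous_fst) fun x hx => ?_
  have hQx : ∀ v, Q (x, v) = 0 := fun v => by
    by_contra hQ
    exact hx ⟨(x, v), subset_tsupport Q hQ, rfl⟩
  simp only [rho, hQx, integral_zero]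

theorem rho_nonneg (hQpos : ∀ p, 0 ≤ Q p) (x : R3) : 0 ≤ rho Q x :=
  integral_nonneg fun v => hQpos (x, v)

theorem continuous_phiF (hQc : Continuous Q) (hQsupp : HasCompactSupport Q) :
    Continuous (phiF Q) :=
  continuous_const.mul ((hasCompactSupport_rho hQsupp).continuous_convolution_left
    (ContinuousLinearMap.mul ℝ ℝ) (continuous_rho hQc hQsupp)
    (locallyIntegrable_norm_inv volume (by simp)))

theorem eventually_lt_phiF (hQc : Continuous Q) (hQpos : ∀ p, 0 ≤ Q p)
    (hQsupp : HasCompactSupport Q) {e : ℝ} (he : e < 0) :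
    ∀ᶠ x in cocompact R3, e < phiF Q x := by
  obtain ⟨R, hR⟩ := (hasCompactSupport_rho hQsupp).isBounded.subset_closedBall 0
  have hρR : ∀ y, R < ‖y‖ → rho Q y = 0 := fun y hy =>
    image_eq_zero_of_notMem_tsupport fun hy' => hy.not_ge (by simpa using hR hy')
  set A := (1 / (4 * π)) * ∫ y, rho Q y
  have hA : 0 ≤ A := mul_nonneg (by positivity) (integral_nonneg (rho_nonneg hQpos))
  set d := (A + 1) / -e
  have hd : 0 < d := div_pos (by linarith) (by linarith)
  have hAd : A / d < -e := by
    rw [div_lt_iff₀ hd, mul_div_cancel₀ _ (by linarith : -e ≠ 0)]; linarith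
  filter_upwards [tendsto_norm_cocompact_atTop.eventually_ge_atTop (R + d)] with x hx
  have hI := integral_div_norm_sub_le
    ((continuous_rho hQc hQsupp).integrable_of_hasCompactSupport (hasCompactSupport_rho hQsupp)
      (μ := volume))
    (rho_nonneg hQpos) hd hρR hx
  have : (1 / (4 * π)) * ∫ y, rho Q y / ‖x - y‖ ≤ A / d := by
    rw [mul_div_assoc]; gcongr
  simp only [phiF]
  linarith

end Potential

theorem volume_half_norm_sq_lt (c : ℝ) :
    volume {v : R3 | ‖v‖ ^ 2 / 2 < c} =
      ENNReal.ofReal (8 * π * Real.sqrt 2 / 3 * max c 0 ^ ((3 : ℝ) / 2)) := by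
  set m := max c 0
  have hm : 0 ≤ m := le_max_right c 0
  have hball : {v : R3 | ‖v‖ ^ 2 / 2 < c} = Metric.ball 0 (Real.sqrt (2 * m)) := by
    ext v
    rw [mem_ball_zero_iff, Real.lt_sqrt (norm_nonneg v)]
    change ‖v‖ ^ 2 / 2 < c ↔ _
    rcases le_total c 0 with hc | hc
    · simp only [m, max_eq_right hc]
      constructor <;> intro h <;> nlinarith [sq_nonneg ‖v‖]
    · simp only [m, max_eq_left hc]
      constructor <;> intro h <;> linarith
  have hcube : Real.sqrt (2 * m) ^ 3 = 2 * Real.sqrt 2 * m ^ ((3 : ℝ) / 2) := by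
    have hm3 : Real.sqrt m ^ 3 = m ^ ((3 : ℝ) / 2) := by
      rw [Real.sqrt_eq_rpow, ← Real.rpow_natCast, ← Real.rpow_mul hm]
      norm_num
    rw [Real.sqrt_mul zero_le_two, mul_pow, pow_succ, Real.sq_sqrt zero_le_two, hm3]
  rw [hball, EuclideanSpace.volume_ball_fin_three, ← ENNReal.ofReal_pow (Real.sqrt_nonneg _),
    ← ENNReal.ofReal_mul (by positivity), hcube]
  ring_nf

theorem integrable_max_sub_rpow {X : Type*} [TopologicalSpace X] [T2Space X] [MeasurableSpace X]
    [OpensMeasurableSpace X] (μ : Measure X) [IsFiniteMeasureOnCompacts μ] {φ : X → ℝ}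
    (hφ : Continuous φ) {e r : ℝ} (hr : 0 < r) (hdecay : ∀ᶠ x in cocompact X, e < φ x) :
    Integrable (fun x => max (e - φ x) 0 ^ r) μ := by
  refine Continuous.integrable_of_hasCompactSupport
    (((continuous_const.sub hφ).max continuous_const).rpow_const fun _ => Or.inr hr.le) ?_
  rw [hasCompactSupport_iff_eventuallyEq, coclosedCompact_eq_cocompact]
  filter_upwards [hdecay] with x hx
  simp [max_eq_right (by linarith : e - φ x ≤ 0), Real.zero_rpow hr.ne']

theorem volume_energy_lt {φ : R3 → ℝ} (hφ : Measurable φ) {e : ℝ}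
    (hint : Integrable (fun x => max (e - φ x) 0 ^ ((3 : ℝ) / 2))) :
    volume {p : R3 × R3 | ‖p.2‖ ^ 2 / 2 + φ p.1 < e} = ENNReal.ofReal (aphi φ e) := by
  have hmeas : MeasurableSet {p : R3 × R3 | ‖p.2‖ ^ 2 / 2 + φ p.1 < e} :=
    measurableSet_lt (by fun_prop) measurable_const
  have hfiber : ∀ x : R3, Prod.mk x ⁻¹' {p : R3 × R3 | ‖p.2‖ ^ 2 / 2 + φ p.1 < e} =
      {v : R3 | ‖v‖ ^ 2 / 2 < e - φ x} := fun x => by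
    ext v
    exact (lt_sub_iff_add_lt (b := φ x)).symm
  rw [Measure.volume_eq_prod, Measure.prod_apply hmeas]
  simp_rw [hfiber, volume_half_norm_sq_lt]
  rw [← ofReal_integral_eq_lintegral_ofReal (hint.const_mul _)
    (Eventually.of_forall fun x => by positivity), integral_const_mul, aphi]

theorem measure_setOf_lt_lt_of_mem_Ioo {X : Type*} [TopologicalSpace X] [MeasurableSpace X]
    [OpensMeasurableSpace X] (μ : Measure X) [μ.IsOpenPosMeasure] {E : X → ℝ}
    (hE : Continuous E) {e e' : ℝ} (hfin : μ {p | E p < e} ≠ ∞) {p₀ : X}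
    (hp₀ : E p₀ ∈ Ioo e e') : μ {p | E p < e} < μ {p | E p < e'} := by
  have hopen : IsOpen (E ⁻¹' Ioo e e') := isOpen_Ioo.preimage hE
  have hdisj : Disjoint {p | E p < e} (E ⁻¹' Ioo e e') :=
    disjoint_left.2 fun p hlt hmem => (lt_asymm hlt hmem.1).elim
  calc μ {p | E p < e} < μ {p | E p < e} + μ (E ⁻¹' Ioo e e') :=
        ENNReal.lt_add_right hfin (hopen.measure_pos μ ⟨p₀, hp₀⟩).ne'
    _ = μ ({p | E p < e} ∪ E ⁻¹' Ioo e e') := (measure_union hdisj hopen.measurableSet).symm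
    _ ≤ μ {p | E p < e'} := measure_mono <| union_subset
        (fun _ hp => hp.trans (hp₀.1.trans hp₀.2)) fun _ hp => hp.2

theorem sInf_measure_gt_eq_of_eq_comp {α : Type*} [MeasurableSpace α] (μ : Measure α)
    {f E : α → ℝ} {F : ℝ → ℝ} (hf : ∀ p, f p = F (E p)) (hFc : Continuous F)
    (hF : Antitone F) (hFnn : ∀ e, 0 ≤ F e) {e : ℝ}
    (hgrow : ∀ e' > e, 0 < F e' → μ {p | E p < e} < μ {p | E p < e'}) :
    sInf {s : ℝ | 0 ≤ s ∧ μ {p | f p > s} ≤ μ {p | E p < e}} = F e := by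
  refine IsLeast.csInf_eq ⟨⟨hFnn e, measure_mono fun p hp => ?_⟩, fun s ⟨hs0, hs⟩ => ?_⟩
  · exact hF.reflect_lt (hf p ▸ hp : F e < F (E p))
  by_contra! hsF
  obtain ⟨e', hsF', he'⟩ :=
    (((hFc.continuousAt.eventually (lt_mem_nhds hsF)).filter_mono nhdsWithin_le_nhds).and
      self_mem_nhdsWithin : ∀ᶠ e' in 𝓝[>] e, s < F e' ∧ e < e').exists
  have hsub : {p | E p < e'} ⊆ {p | f p > s} := fun p hp =>
    show f p > s by rw [hf p]; exact hsF'.trans_le (hF hp.le)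
  exact (hgrow e' he' (hs0.trans_lt hsF')).not_ge ((measure_mono hsub).trans hs)

theorem schwarz_eq_of_eq_comp_energy {Q : R3 × R3 → ℝ} {φ : R3 → ℝ} {F : ℝ → ℝ}
    (hφ : Continuous φ) (hdecay : ∀ e < 0, ∀ᶠ x in cocompact R3, e < φ x)
    (hFc : Continuous F) (hF : Antitone F) {e₀ : ℝ}
    (hF0 : ∀ e, e₀ ≤ e → F e = 0)
    (hQF : ∀ p : R3 × R3, Q p = F (‖p.2‖ ^ 2 / 2 + φ p.1))
    {e : ℝ} (he : e < 0) {x₀ : R3} (hx₀ : φ x₀ ≤ e) :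
    schwarz Q (aphi φ e) = F e := by
  have hvol : ∀ e < 0, volume {p : R3 × R3 | ‖p.2‖ ^ 2 / 2 + φ p.1 < e} =
      ENNReal.ofReal (aphi φ e) := fun e he =>
    volume_energy_lt hφ.measurable (integrable_max_sub_rpow volume hφ (by norm_num) (hdecay e he))
  have hFnn (e : ℝ) : 0 ≤ F e :=
    (hF0 _ (le_max_right e e₀)).symm.le.trans (hF (le_max_left e e₀))
  have hgrow : ∀ e' > e, 0 < F e' → volume {p : R3 × R3 | ‖p.2‖ ^ 2 / 2 + φ p.1 < e} <
      volume {p : R3 × R3 | ‖p.2‖ ^ 2 / 2 + φ p.1 < e'} := by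
    intro e' he' _
    -- a phase-space point of energy `(e + e') / 2` above `x₀`
    obtain ⟨v, hv⟩ := exists_norm_eq R3 (Real.sqrt_nonneg (e + e' - 2 * φ x₀))
    refine measure_setOf_lt_lt_of_mem_Ioo volume (by fun_prop)
      ((hvol e he).trans_ne ENNReal.ofReal_ne_top) (p₀ := (x₀, v)) ?_
    rw [hv, Real.sq_sqrt (by linarith)]
    constructor <;> linarith
  unfold schwarz distFun
  rw [← hvol e he]
  exact sInf_measure_gt_eq_of_eq_comp volume hQF hFc hF hFnn hgrow

theorem spherical_model_fixed_point_general (Q : R3 × R3 → ℝ)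
    (hQc : Continuous Q) (hQpos : ∀ p, 0 ≤ Q p)
    (hQsupp : HasCompactSupport Q)
    (F : ℝ → ℝ) (hFc : Continuous F) (e₀ : ℝ) (he₀ : e₀ < 0)
    (hF0 : ∀ e, e₀ ≤ e → F e = 0)
    (hFdec : StrictAntiOn F (Iic e₀))
    (hQF : ∀ p : R3 × R3, Q p = F (‖p.2‖ ^ 2 / 2 + phiF Q p.1)) :
    (∀ e ∈ Ico (phiF Q (0 : R3)) (0 : ℝ), F e = schwarz Q (aphi (phiF Q) e)) ∧
    genRearr Q (phiF Q) = Q := by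
  have hF : Antitone F :=
    hFdec.antitoneOn.Iic_union_Ici fun a ha b hb _ => by rw [hF0 a ha, hF0 b hb]
  have key (x : R3) (e : ℝ) (hx : phiF Q x ≤ e) (he : e < 0) :
      F e = schwarz Q (aphi (phiF Q) e) :=
    (schwarz_eq_of_eq_comp_energy (continuous_phiF hQc hQsupp)
      (fun _ he => eventually_lt_phiF hQc hQpos hQsupp he) hFc hF hF0 hQF he hx).symm
  refine ⟨fun e he => key 0 e he.1 he.2, funext fun p => ?_⟩
  rw [genRearr, hQF p]
  split_ifs with hE
  · exact (key p.1 _ (le_add_of_nonneg_left (by positivity)) hE).symm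
  · exact (hF0 _ (he₀.le.trans (not_lt.1 hE))).symm

theorem spherical_model_fixed_point (Q : R3 × R3 → ℝ)
    (hQc : Continuous Q) (hQpos : ∀ p, 0 ≤ Q p) (hQne : Q ≠ 0)
    (hQsupp : HasCompactSupport Q)
    (F : ℝ → ℝ) (hFc : Continuous F) (e₀ : ℝ) (he₀ : e₀ < 0)
    (hF0 : ∀ e, e₀ ≤ e → F e = 0)
    (hF1 : ContDiffOn ℝ 1 F (Iio e₀))
    (hFdec : StrictAntiOn F (Iic e₀))
    (hQF : ∀ p : R3 × R3, Q p = F (‖p.2‖ ^ 2 / 2 + phiF Q p.1)) :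
    (∀ e ∈ Ico (phiF Q (0 : R3)) (0 : ℝ), F e = schwarz Q (aphi (phiF Q) e)) ∧
    genRearr Q (phiF Q) = Q :=
  spherical_model_fixed_point_general Q hQc hQpos hQsupp F hFc e₀ he₀ hF0 hFdec hQF
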